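/- arXiv:1702.03530 — 4 statements merged into one kernel-verified Lean document; each statement's English description precedes it below -/
import Mathlib

section
/- Lemma 10: Let C be a graphoid of CI relations on [p] and let G_π and G_τ be minimal I-MAPs with respect to C with G_π ≤ G_τ. If a node Y ∈ [p] is a sink (has no outgoing arrows) in both G_π and G_τ, then Y has the same set of incoming arrows in both: pa_{G_π}(Y) = pa_{G_τ}(Y). -/
open scoped Classical

namespace GSP

/-- A DAG on the node set `Fin p`, given by its finite set of arrows,
which must form an acyclic relation. -/
structure DAG (p : ℕ) where
  arrows : Finset (Fin p × Fin p)
  acyclic : ∀ i : Fin p, ¬ Relation.TransGen (fun a b => (a, b) ∈ arrows) i i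

variable {p : ℕ}

namespace DAG

/-- `a → b` is an arrow of `G`. -/
def Arrow (G : DAG p) (a b : Fin p) : Prop := (a, b) ∈ G.arrows

/-- The number of arrows of `G`, denoted `|G|`. -/
def numArrows (G : DAG p) : ℕ := G.arrows.card

/-- The set of parents of a node `j` in `G`. -/
noncomputable def parents (G : DAG p) (j : Fin p) : Finset (Fin p) :=
  Finset.univ.filter fun i => G.Arrow i j

/-- Adjacency: `a` and `b` are joined by an arrow in some direction. -/
def Adj (G : DAG p) (a b : Fin p) : Prop := G.Arrow a b ∨ G.Arrow b a

/-- `b` is a collider between `a` and `c`: both arrows point into `b`. -/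
def Collider (G : DAG p) (a b c : Fin p) : Prop := G.Arrow a b ∧ G.Arrow c b

/-- `d` is a (reflexive) descendant of `a` in `G`. -/
def Desc (G : DAG p) (a d : Fin p) : Prop := Relation.ReflTransGen G.Arrow a d

/-- The list of nodes `l` is a d-connecting walk given `S`: consecutive nodes
are adjacent, every internal collider lies in `S` or has a descendant in `S`,
and no internal non-collider lies in `S`. -/
def DConnWalk (G : DAG p) (S : Finset (Fin p)) (l : List (Fin p)) : Prop :=
  l.Chain' G.Adj ∧
  ∀ (m : ℕ) (_ : 1 ≤ m) (h2 : m + 1 < l.length),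
    (G.Collider (l.get ⟨m - 1, by omega⟩) (l.get ⟨m, by omega⟩) (l.get ⟨m + 1, h2⟩) →
      ∃ d ∈ S, G.Desc (l.get ⟨m, by omega⟩) d) ∧
    (¬ G.Collider (l.get ⟨m - 1, by omega⟩) (l.get ⟨m, by omega⟩) (l.get ⟨m + 1, h2⟩) →
      l.get ⟨m, by omega⟩ ∉ S)

/-- `i` and `j` are d-connected given `S` in `G`. -/
def DConn (G : DAG p) (i j : Fin p) (S : Finset (Fin p)) : Prop :=
  ∃ l : List (Fin p), l.head? = some i ∧ l.getLast? = some j ∧ G.DConnWalk S l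

/-- `i` and `j` are d-separated given `S` in `G`. -/
def DSep (G : DAG p) (i j : Fin p) (S : Finset (Fin p)) : Prop := ¬ G.DConn i j S

end DAG

/-- A conditional independence (CI) relation `i ⊥ j | S` on `[p]`. -/
abbrev CIRel (p : ℕ) := Fin p × Fin p × Finset (Fin p)

/-- The set of CI relations encoded by the d-separations of `G`. -/
def CIof (G : DAG p) : Set (CIRel p) :=
  {t | t.1 ≠ t.2.1 ∧ t.1 ∉ t.2.2 ∧ t.2.1 ∉ t.2.2 ∧ G.DSep t.1 t.2.1 t.2.2}

/-- The symmetric closure of a set of CI relations. -/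
def symClosure (C : Set (CIRel p)) : Set (CIRel p) :=
  {t | t ∈ C ∨ (t.2.1, t.1, t.2.2) ∈ C}

/-- Symmetry of a set of CI relations. -/
def SymmetricCI (C : Set (CIRel p)) : Prop :=
  ∀ i j S, (i, j, S) ∈ C → (j, i, S) ∈ C

/-- A semigraphoid: symmetric and satisfying (SG2). -/
def Semigraphoid (C : Set (CIRel p)) : Prop :=
  SymmetricCI C ∧
  ∀ i j k S, (i, j, S) ∈ C → (i, k, insert j S) ∈ C →
    (i, k, S) ∈ C ∧ (i, j, insert k S) ∈ C

/-- A graphoid: a semigraphoid additionally satisfying intersection (INT). -/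
def Graphoid (C : Set (CIRel p)) : Prop :=
  Semigraphoid C ∧
  ∀ i j k S, (i, j, insert k S) ∈ C → (i, k, insert j S) ∈ C →
    (i, j, S) ∈ C ∧ (i, k, S) ∈ C

/-- Build a DAG from a relation compatible with a numeric ordering. -/
noncomputable def mkDAG (R : Fin p → Fin p → Prop) (f : Fin p → ℕ)
    (hf : ∀ a b, R a b → f a < f b) : DAG p where
  arrows := Finset.univ.filter fun e : Fin p × Fin p => R e.1 e.2
  acyclic := by
    intro i hi
    have key : ∀ a b : Fin p,
        Relation.TransGen (fun a b : Fin p =>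
          (a, b) ∈ Finset.univ.filter fun e : Fin p × Fin p => R e.1 e.2) a b →
        f a < f b := by
      intro a b h
      induction h with
      | single h => exact hf _ _ (by simpa using h)
      | tail _ h ih => exact lt_trans ih (hf _ _ (by simpa using h))
    exact lt_irrefl _ (key i i hi)

/-- The conditioning set `{π_1, …, π_j} \ {π_i, π_j}` (where `b = π_j` is the
later node and `a = π_i` the earlier one) used in the definition of minimal
I-MAPs. -/
noncomputable def condSet (π : Equiv.Perm (Fin p)) (a b : Fin p) : Finset (Fin p) :=
  ((Finset.univ.filter fun k : Fin p => π.symm k ≤ π.symm b).erase a).erase b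

/-- The minimal I-MAP `G_π` of a set `C` of CI relations with respect to the
permutation (ordering) `π`: there is an arrow `π_i → π_j` for positions `i < j`
iff `π_i ⊥ π_j | {π_1, …, π_j} \ {π_i, π_j}` is not in `C`. -/
noncomputable def minimalIMAP (C : Set (CIRel p)) (π : Equiv.Perm (Fin p)) : DAG p :=
  mkDAG (fun a b => π.symm a < π.symm b ∧ (a, b, condSet π a b) ∉ C)
    (fun a => (π.symm a : ℕ)) (fun a b h => by exact_mod_cast h.1)

/-- Markov equivalence of DAGs: equal sets of d-separation statements. -/
def MarkovEquiv (G H : DAG p) : Prop := CIof G = CIof H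

/-- `H` is an independence map of `G`, written `G ≤ H`: `CI(H) ⊆ CI(G)`. -/
def IMapLE (G H : DAG p) : Prop := CIof H ⊆ CIof G

/-- `π` is a linear extension of `G`: every arrow goes from an earlier to a
later element of `π`. -/
def IsLinExt (G : DAG p) (π : Equiv.Perm (Fin p)) : Prop :=
  ∀ a b, G.Arrow a b → π.symm a < π.symm b

/-- `a → b` is a covered arrow of `G`: `pa(a) = pa(b) \ {a}`. -/
def DAG.Covered (G : DAG p) (a b : Fin p) : Prop :=
  G.Arrow a b ∧ G.parents a = (G.parents b).erase a

/-- The minimal I-MAPs `G_σ` and `G_ρ` are connected by a covered arrow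
reversal: `ρ` is a linear extension of the DAG obtained from `G_σ` by
reversing one covered arrow of `G_σ`. -/
def CoveredReversalStep (C : Set (CIRel p)) (σ ρ : Equiv.Perm (Fin p)) : Prop :=
  ∃ a b : Fin p, (minimalIMAP C σ).Covered a b ∧
    ρ.symm b < ρ.symm a ∧
    ∀ x y : Fin p, (minimalIMAP C σ).Arrow x y → (x, y) ≠ (a, b) →
      ρ.symm x < ρ.symm y

/-- A weakly decreasing sequence of covered arrow reversals: a sequence of
minimal I-MAPs in which consecutive members are connected by covered arrow
reversals and the number of arrows never increases. -/
def WeaklyDecreasingSeq (C : Set (CIRel p)) (s : List (Equiv.Perm (Fin p))) : Prop :=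
  s.Chain' fun σ ρ => CoveredReversalStep C σ ρ ∧
    (minimalIMAP C ρ).numArrows ≤ (minimalIMAP C σ).numArrows

/-- Some weakly decreasing sequence of covered arrow reversals starting at
`G_π` reaches a minimal I-MAP with strictly fewer arrows. -/
def EscapesByCoveredReversals (C : Set (CIRel p)) (π : Equiv.Perm (Fin p)) : Prop :=
  ∃ (s : List (Equiv.Perm (Fin p))) (τ : Equiv.Perm (Fin p)),
    s.head? = some π ∧ s.getLast? = some τ ∧ WeaklyDecreasingSeq C s ∧
    (minimalIMAP C τ).numArrows < (minimalIMAP C π).numArrows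

/-- The TSP assumption of `C` with respect to `G`. -/
def TSP (C : Set (CIRel p)) (G : DAG p) : Prop :=
  CIof G ⊆ C ∧
  ∀ π : Equiv.Perm (Fin p), ¬ EscapesByCoveredReversals C π →
    MarkovEquiv (minimalIMAP C π) G

/-- The SMR assumption of `C` with respect to `G`. -/
def SMR (C : Set (CIRel p)) (G : DAG p) : Prop :=
  CIof G ⊆ C ∧
  ∀ H : DAG p, CIof H ⊆ C → ¬ MarkovEquiv H G → G.numArrows < H.numArrows

end GSP

namespace GSP

section Aux

variable {p : ℕ}

lemma arrow_iff (C : Set (CIRel p)) (π : Equiv.Perm (Fin p)) (a b : Fin p) :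
    (minimalIMAP C π).Arrow a b ↔ π.symm a < π.symm b ∧ (a, b, condSet π a b) ∉ C := by
  simp [minimalIMAP, mkDAG, DAG.Arrow]

lemma mem_parents_iff {G : DAG p} {a Y : Fin p} : a ∈ G.parents Y ↔ G.Arrow a Y := by
  simp [DAG.parents]

lemma not_self_parent (G : DAG p) (Y : Fin p) : Y ∉ G.parents Y := by
  rw [mem_parents_iff]
  exact fun h => G.acyclic Y (Relation.TransGen.single h)

lemma dconn_of_arrow {G : DAG p} {a Y : Fin p} (h : G.Arrow a Y) (S : Finset (Fin p)) :
    G.DConn Y a S := by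
  refine ⟨[Y, a], rfl, rfl, ?_, ?_⟩
  · exact List.isChain_cons_cons.2 ⟨Or.inr h, List.isChain_singleton a⟩
  · intro m h1 h2
    simp only [List.length_cons, List.length_nil] at h2
    omega

lemma sink_dsep {G : DAG p} {Y x : Fin p} (hsink : ∀ z, ¬ G.Arrow Y z)
    (hxY : x ≠ Y) (hx : x ∉ G.parents Y) : G.DSep Y x (G.parents Y) := by
  rintro ⟨l, hhead, hlast, hchain, hcond⟩
  cases l with
  | nil => simp at hhead
  | cons Y' t =>
    have hY' : Y = Y' := (by simpa using hhead : Y' = Y).symm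
    subst hY'
    cases t with
    | nil =>
      have : Y = x := by simpa using hlast
      exact hxY this.symm
    | cons w t' =>
      have hadj : G.Adj Y w := (List.isChain_cons_cons.1 hchain).1
      have hw : G.Arrow w Y := hadj.resolve_left (hsink w)
      have hwpa : w ∈ G.parents Y := mem_parents_iff.2 hw
      cases t' with
      | nil =>
        have : w = x := by simpa using hlast
        exact hx (this ▸ hwpa)
      | cons v rest =>
        have h2 : 1 + 1 < (Y :: w :: v :: rest).length := by
          simp only [List.length_cons]; omega
        have hc := (hcond 1 le_rfl h2).2
        have hncol : ¬ G.Collider ((Y :: w :: v :: rest).get ⟨1 - 1, by omega⟩)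
            ((Y :: w :: v :: rest).get ⟨1, by omega⟩) ((Y :: w :: v :: rest).get ⟨1 + 1, h2⟩) := by
          intro hcol
          exact hsink w hcol.1
        exact (hc hncol) hwpa

lemma sg_chain (C : Set (CIRel p)) (hsg : Semigraphoid C)
    (Y : Fin p) (W : Finset (Fin p)) (f : Fin p → ℕ)
    (hinj : ∀ u v : Fin p, f u = f v → u = v) :
    ∀ L : Finset (Fin p),
      (∀ z ∈ L, (Y, z, W ∪ L.filter fun k => f k < f z) ∈ C) →
      ∀ z ∈ L, ∀ M ⊆ L.erase z, (Y, z, W ∪ M) ∈ C := by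
  intro L
  induction L using Finset.strongInductionOn with
  | _ L IH =>
  intro hL z hz M hM
  obtain ⟨t, ht, htmax⟩ := Finset.exists_max_image L f ⟨z, hz⟩
  have hstrict : ∀ u ∈ L, u ≠ t → f u < f t := fun u hu hut =>
    lt_of_le_of_ne (htmax u hu) (fun h => hut (hinj u t h))
  have hL'sub : L.erase t ⊂ L := Finset.erase_ssubset ht
  have hfiltt : (L.filter fun k => f k < f t) = L.erase t := by
    ext k
    simp only [Finset.mem_filter, Finset.mem_erase]
    constructor
    · rintro ⟨hk, hlt⟩
      exact ⟨fun h => absurd (h ▸ hlt) (lt_irrefl _), hk⟩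
    · rintro ⟨hne, hk⟩
      exact ⟨hk, hstrict k hk hne⟩
  have hfilt : ∀ u ∈ L.erase t,
      ((L.erase t).filter fun k => f k < f u) = L.filter fun k => f k < f u := by
    intro u hu
    have hut : f u < f t := hstrict u (Finset.mem_of_mem_erase hu) (Finset.ne_of_mem_erase hu)
    ext k
    simp only [Finset.mem_filter, Finset.mem_erase]
    constructor
    · rintro ⟨⟨_, hk⟩, hlt⟩; exact ⟨hk, hlt⟩
    · rintro ⟨hk, hlt⟩
      exact ⟨⟨fun h => (by omega : ¬ f t < f u) (h ▸ hlt), hk⟩, hlt⟩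
  have IH1 : ∀ u ∈ L.erase t, ∀ M' ⊆ (L.erase t).erase u, (Y, u, W ∪ M') ∈ C := by
    intro u hu M' hM'
    refine IH (L.erase t) hL'sub ?_ u hu M' hM'
    intro v hv
    rw [hfilt v hv]
    exact hL v (Finset.mem_of_mem_erase hv)
  have claim1d : ∀ D : Finset (Fin p), D ⊆ L.erase t → (Y, t, W ∪ (L.erase t \ D)) ∈ C := by
    intro D
    induction D using Finset.induction_on with
    | empty =>
      intro _
      rw [Finset.sdiff_empty]
      have h0 := hL t ht
      rwa [hfiltt] at h0
    | @insert y D hyD IHD =>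
      intro hins
      have hyL' : y ∈ L.erase t := hins (Finset.mem_insert_self y D)
      have hDL' : D ⊆ L.erase t := fun k hk => hins (Finset.mem_insert_of_mem hk)
      have hprev := IHD hDL'
      have hset1 : L.erase t \ insert y D = (L.erase t \ D).erase y := by
        ext k
        simp only [Finset.mem_sdiff, Finset.mem_erase, Finset.mem_insert]
        tauto
      have hIH1y : (Y, y, W ∪ (L.erase t \ insert y D)) ∈ C := by
        apply IH1 y hyL'
        intro k hk
        rw [hset1] at hk
        rcases Finset.mem_erase.1 hk with ⟨hky, hk2⟩
        exact Finset.mem_erase.2 ⟨hky, (Finset.mem_sdiff.1 hk2).1⟩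
      have hset2 : insert y (W ∪ (L.erase t \ insert y D)) = W ∪ (L.erase t \ D) := by
        ext k
        by_cases hk : k = y
        · subst hk
          simp [hyL', hyD]
        · simp only [Finset.mem_insert, Finset.mem_union, Finset.mem_sdiff, hk, false_or]
      exact (hsg.2 Y y t (W ∪ (L.erase t \ insert y D)) hIH1y (by rwa [hset2])).1
  have claim1 : ∀ M' ⊆ L.erase t, (Y, t, W ∪ M') ∈ C := by
    intro M' hM'
    have h0 := claim1d (L.erase t \ M') Finset.sdiff_subset
    rwa [Finset.sdiff_sdiff_eq_self hM'] at h0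
  have claim2 : ∀ u ∈ L.erase t, ∀ M' ⊆ (L.erase t).erase u,
      (Y, u, insert t (W ∪ M')) ∈ C := by
    intro u hu M' hM'
    have h1 := IH1 u hu M' hM'
    have h2 : (Y, t, insert u (W ∪ M')) ∈ C := by
      rw [← Finset.union_insert]
      apply claim1
      intro k hk
      rcases Finset.mem_insert.1 hk with h | h
      · exact h ▸ hu
      · exact Finset.mem_of_mem_erase (hM' h)
    exact (hsg.2 Y u t (W ∪ M') h1 h2).2
  by_cases hzt : z = t
  · subst hzt
    exact claim1 M hM
  · have hzL' : z ∈ L.erase t := Finset.mem_erase.2 ⟨hzt, hz⟩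
    by_cases htM : t ∈ M
    · have hMe : M.erase t ⊆ (L.erase t).erase z := by
        intro k hk
        rcases Finset.mem_erase.1 hk with ⟨hkt, hkM⟩
        rcases Finset.mem_erase.1 (hM hkM) with ⟨hkz, hkL⟩
        exact Finset.mem_erase.2 ⟨hkz, Finset.mem_erase.2 ⟨hkt, hkL⟩⟩
      have h0 := claim2 z hzL' (M.erase t) hMe
      have hset : insert t (W ∪ M.erase t) = W ∪ M := by
        rw [← Finset.union_insert, Finset.insert_erase htM]
      rwa [hset] at h0
    · apply IH1 z hzL'
      intro k hk
      rcases Finset.mem_erase.1 (hM hk) with ⟨hkz, hkL⟩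
      exact Finset.mem_erase.2 ⟨hkz, Finset.mem_erase.2 ⟨fun h => htM (h ▸ hk), hkL⟩⟩

/-- The position of node `k` in the ordering `π`, as a natural number. -/
def ordf (π : Equiv.Perm (Fin p)) (k : Fin p) : ℕ := (π.symm k : ℕ)

lemma ordf_inj (π : Equiv.Perm (Fin p)) : ∀ u v : Fin p, ordf π u = ordf π v → u = v :=
  fun _ _ h => π.symm.injective (Fin.val_injective h)

lemma ordf_lt (π : Equiv.Perm (Fin p)) (u v : Fin p) :
    π.symm u < π.symm v ↔ ordf π u < ordf π v := Fin.lt_def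

lemma mem_condSet (π : Equiv.Perm (Fin p)) (a b k : Fin p) :
    k ∈ condSet π a b ↔ k ≠ b ∧ k ≠ a ∧ ordf π k ≤ ordf π b := by
  simp only [condSet, Finset.mem_erase, Finset.mem_filter, Finset.mem_univ, and_true, true_and]
  rw [Fin.le_def]
  exact Iff.rfl

lemma sink_local_markov (C : Set (CIRel p)) (hC : Graphoid C)
    (π : Equiv.Perm (Fin p)) (Y : Fin p)
    (hsink : ∀ z, ¬ (minimalIMAP C π).Arrow Y z)
    (T : Finset (Fin p)) (hpaT : (minimalIMAP C π).parents Y ⊆ T)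
    (x : Fin p) (hxT : x ∉ T) (hxY : x ≠ Y) (hYT : Y ∉ T) :
    (Y, x, T) ∈ C := by
  obtain ⟨hsg, hint⟩ := hC
  have hinj := ordf_inj π
  set Pre : Finset (Fin p) := Finset.univ.filter (fun k => ordf π k < ordf π Y) with hPre
  set L : Finset (Fin p) := Finset.univ.filter (fun k => ordf π Y < ordf π k) with hLdef
  have hmemPre : ∀ k, k ∈ Pre ↔ ordf π k < ordf π Y := by
    intro k; rw [hPre]; simp
  have hmemL : ∀ k, k ∈ L ↔ ordf π Y < ordf π k := by
    intro k; rw [hLdef]; simp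
  -- Step 1: semigraphoid chain consequences of the sink property
  have hS1 : ∀ z ∈ L, ∀ M ⊆ L.erase z, (Y, z, Pre ∪ M) ∈ C := by
    apply sg_chain C hsg Y Pre (ordf π) hinj
    intro z hz
    have hYz : ordf π Y < ordf π z := (hmemL z).1 hz
    have harr := hsink z
    rw [arrow_iff] at harr
    have hCmem : (Y, z, condSet π Y z) ∈ C := by
      by_contra hnot
      exact harr ⟨(ordf_lt π Y z).2 hYz, hnot⟩
    have hseteq : condSet π Y z = Pre ∪ L.filter (fun k => ordf π k < ordf π z) := by
      ext k
      rw [mem_condSet]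
      simp only [Finset.mem_union, Finset.mem_filter, hmemPre, hmemL]
      constructor
      · rintro ⟨hkz, hkY, hle⟩
        have h1 : ordf π k ≠ ordf π z := fun h => hkz (hinj _ _ h)
        have h2 : ordf π k ≠ ordf π Y := fun h => hkY (hinj _ _ h)
        omega
      · rintro (h | ⟨h1, h2⟩)
        · exact ⟨fun e => by rw [e] at h; omega, fun e => by rw [e] at h; omega, by omega⟩
        · exact ⟨fun e => by rw [e] at h2; omega, fun e => by rw [e] at h1; omega, by omega⟩
    rwa [hseteq] at hCmem
  -- Step 2: extend the non-parent relations by later nodes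
  have hS2 : ∀ a, ordf π a < ordf π Y → a ∉ (minimalIMAP C π).parents Y →
      ∀ M ⊆ L, (Y, a, Pre.erase a ∪ M) ∈ C := by
    intro a haY hapa M
    have haPre : a ∈ Pre := (hmemPre a).2 haY
    have hbase : (Y, a, Pre.erase a) ∈ C := by
      have hnarr : ¬ (minimalIMAP C π).Arrow a Y := fun h => hapa (mem_parents_iff.2 h)
      rw [arrow_iff] at hnarr
      have hCmem : (a, Y, condSet π a Y) ∈ C := by
        by_contra hnot
        exact hnarr ⟨(ordf_lt π a Y).2 haY, hnot⟩
      have hsym := hsg.1 a Y _ hCmem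
      have hseteq : condSet π a Y = Pre.erase a := by
        ext k
        rw [mem_condSet]
        simp only [Finset.mem_erase, hmemPre]
        constructor
        · rintro ⟨hkY, hka, hle⟩
          have h2 : ordf π k ≠ ordf π Y := fun h => hkY (hinj _ _ h)
          exact ⟨hka, by omega⟩
        · rintro ⟨hka, hlt⟩
          exact ⟨fun e => by rw [e] at hlt; omega, hka, by omega⟩
      rwa [hseteq] at hsym
    induction M using Finset.induction_on with
    | empty => intro _; simpa using hbase
    | @insert z M hzM IHM =>
      intro hins
      have hzL : z ∈ L := hins (Finset.mem_insert_self z M)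
      have hML : M ⊆ L := fun k hk => hins (Finset.mem_insert_of_mem hk)
      have h1 := IHM hML
      have h2 : (Y, z, insert a (Pre.erase a ∪ M)) ∈ C := by
        rw [← Finset.insert_union, Finset.insert_erase haPre]
        apply hS1 z hzL
        intro k hk
        exact Finset.mem_erase.2 ⟨fun e => hzM (e ▸ hk), hML hk⟩
      have h3 := (hsg.2 Y a z (Pre.erase a ∪ M) h1 h2).2
      rwa [← Finset.union_insert] at h3
  -- Step 3: full-conditioning statements for all non-parents
  have hbaseE : ∀ x', x' ≠ Y → x' ∉ (minimalIMAP C π).parents Y →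
      (Y, x', (Finset.univ.erase Y).erase x') ∈ C := by
    intro x' hx'Y hx'pa
    have hfxY : ordf π x' ≠ ordf π Y := fun h => hx'Y (hinj _ _ h)
    rcases lt_or_gt_of_ne hfxY with hlt | hgt
    · have h0 := hS2 x' hlt hx'pa L Finset.Subset.rfl
      have hseteq : Pre.erase x' ∪ L = (Finset.univ.erase Y).erase x' := by
        ext k
        simp only [Finset.mem_union, Finset.mem_erase, hmemPre, hmemL, Finset.mem_univ, and_true]
        constructor
        · rintro (⟨hka, hk⟩ | hk)
          · exact ⟨hka, fun e => by rw [e] at hk; omega⟩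
          · exact ⟨fun e => by rw [e] at hk; omega, fun e => by rw [e] at hk; omega⟩
        · rintro ⟨hkx, hkY⟩
          have h2 : ordf π k ≠ ordf π Y := fun h => hkY (hinj _ _ h)
          rcases lt_or_gt_of_ne h2 with h | h
          · exact Or.inl ⟨hkx, h⟩
          · exact Or.inr h
      rwa [hseteq] at h0
    · have hx'L : x' ∈ L := (hmemL x').2 hgt
      have h0 := hS1 x' hx'L (L.erase x') Finset.Subset.rfl
      have hseteq : Pre ∪ L.erase x' = (Finset.univ.erase Y).erase x' := by
        ext k
        simp only [Finset.mem_union, Finset.mem_erase, hmemPre, hmemL, Finset.mem_univ, and_true]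
        constructor
        · rintro (hk | ⟨hkx, hk⟩)
          · exact ⟨fun e => by rw [e] at hk; omega, fun e => by rw [e] at hk; omega⟩
          · exact ⟨hkx, fun e => by rw [e] at hk; omega⟩
        · rintro ⟨hkx, hkY⟩
          have h2 : ordf π k ≠ ordf π Y := fun h => hkY (hinj _ _ h)
          rcases lt_or_gt_of_ne h2 with h | h
          · exact Or.inl h
          · exact Or.inr ⟨hkx, h⟩
      rwa [hseteq] at h0
  -- Step 4: intersection lets us remove any set of non-parents
  have hE : ∀ R : Finset (Fin p), (∀ r ∈ R, r ∉ (minimalIMAP C π).parents Y) → Y ∉ R →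
      ∀ x' ∈ R, (Y, x', Finset.univ.erase Y \ R) ∈ C := by
    intro R
    induction R using Finset.strongInductionOn with
    | _ R IHR =>
    intro hRpa hYR x' hx'R
    by_cases hsing : ∃ y ∈ R, y ≠ x'
    · obtain ⟨y, hyR, hyx⟩ := hsing
      have hErase : ∀ u ∈ R, Finset.univ.erase Y \ R.erase u =
          insert u (Finset.univ.erase Y \ R) := by
        intro u hu
        have huY : u ≠ Y := fun e => hYR (e ▸ hu)
        ext k
        by_cases hk : k = u
        · subst hk
          simp [huY, hu]
        · simp only [Finset.mem_sdiff, Finset.mem_erase, Finset.mem_insert, hk, false_or]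
          tauto
      have h1 : (Y, x', insert y (Finset.univ.erase Y \ R)) ∈ C := by
        rw [← hErase y hyR]
        exact IHR (R.erase y) (Finset.erase_ssubset hyR)
          (fun r hr => hRpa r (Finset.mem_of_mem_erase hr))
          (fun h => hYR (Finset.mem_of_mem_erase h))
          x' (Finset.mem_erase.2 ⟨Ne.symm hyx, hx'R⟩)
      have h2 : (Y, y, insert x' (Finset.univ.erase Y \ R)) ∈ C := by
        rw [← hErase x' hx'R]
        exact IHR (R.erase x') (Finset.erase_ssubset hx'R)
          (fun r hr => hRpa r (Finset.mem_of_mem_erase hr))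
          (fun h => hYR (Finset.mem_of_mem_erase h))
          y (Finset.mem_erase.2 ⟨hyx, hyR⟩)
      exact (hint Y x' y (Finset.univ.erase Y \ R) h1 h2).1
    · push_neg at hsing
      have hReq : R = {x'} := Finset.eq_singleton_iff_unique_mem.2 ⟨hx'R, fun y hy => hsing y hy⟩
      have hx'Y : x' ≠ Y := fun e => hYR (e ▸ hx'R)
      rw [hReq, ← Finset.erase_eq]
      exact hbaseE x' hx'Y (hRpa x' hx'R)
  -- Conclusion
  have hTsub : T ⊆ Finset.univ.erase Y := fun k hk =>
    Finset.mem_erase.2 ⟨fun e => hYT (e ▸ hk), Finset.mem_univ k⟩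
  have hfinal := hE (Finset.univ.erase Y \ T)
    (fun r hr hrpa => (Finset.mem_sdiff.1 hr).2 (hpaT hrpa))
    (fun h => (Finset.mem_erase.1 (Finset.mem_sdiff.1 h).1).1 rfl)
    x (Finset.mem_sdiff.2 ⟨Finset.mem_erase.2 ⟨hxY, Finset.mem_univ x⟩, hxT⟩)
  rwa [Finset.sdiff_sdiff_eq_self hTsub] at hfinal

end Aux

/-- Lemma 10: if `C` is a graphoid, `G_π ≤ G_τ` are minimal
I-MAPs w.r.t. `C`, and `Y` is a sink node of both, then `Y` has the same set
of incoming arrows in both: `pa_{G_π}(Y) = pa_{G_τ}(Y)`. -/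
theorem common_sinks_have_equal_parents
    (p : ℕ) (C : Set (CIRel p)) (hC : Graphoid C)
    (π τ : Equiv.Perm (Fin p))
    (hle : IMapLE (minimalIMAP C π) (minimalIMAP C τ))
    (Y : Fin p)
    (hsinkπ : ∀ z : Fin p, ¬ (minimalIMAP C π).Arrow Y z)
    (hsinkτ : ∀ z : Fin p, ¬ (minimalIMAP C τ).Arrow Y z) :
    (minimalIMAP C π).parents Y = (minimalIMAP C τ).parents Y := by
  -- Direction 1: pa_π(Y) ⊆ pa_τ(Y), via d-separation and G_π ≤ G_τ.
  have hsub : (minimalIMAP C π).parents Y ⊆ (minimalIMAP C τ).parents Y := by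
    intro a ha
    by_contra hna
    have harr : (minimalIMAP C π).Arrow a Y := mem_parents_iff.1 ha
    have haY : a ≠ Y := by
      intro h
      exact (minimalIMAP C π).acyclic Y (Relation.TransGen.single (h ▸ harr))
    have hYpa : Y ∉ (minimalIMAP C τ).parents Y := not_self_parent _ _
    have hdsep : (minimalIMAP C τ).DSep Y a ((minimalIMAP C τ).parents Y) :=
      sink_dsep hsinkτ haY hna
    have hmem : (Y, a, (minimalIMAP C τ).parents Y) ∈ CIof (minimalIMAP C τ) :=
      ⟨Ne.symm haY, hYpa, hna, hdsep⟩
    exact (hle hmem).2.2.2 (dconn_of_arrow harr _)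
  -- Direction 2: pa_τ(Y) ⊆ pa_π(Y), via graphoid axioms.
  refine Finset.Subset.antisymm hsub ?_
  intro a ha
  by_contra hna
  have harr : (minimalIMAP C τ).Arrow a Y := mem_parents_iff.1 ha
  rw [arrow_iff] at harr
  obtain ⟨hlt, hnotC⟩ := harr
  apply hnotC
  have haY : a ≠ Y := by
    intro h
    rw [h] at hlt
    exact lt_irrefl _ hlt
  have hpaT : (minimalIMAP C π).parents Y ⊆ condSet τ a Y := by
    intro b hb
    have hbτ : (minimalIMAP C τ).Arrow b Y := mem_parents_iff.1 (hsub hb)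
    rw [arrow_iff] at hbτ
    have hblt : ordf τ b < ordf τ Y := (ordf_lt τ b Y).1 hbτ.1
    refine (mem_condSet τ a Y b).2 ⟨?_, ?_, by omega⟩
    · intro e
      rw [e] at hblt
      exact lt_irrefl _ hblt
    · intro e
      exact hna (e ▸ hb)
  have haC : a ∉ condSet τ a Y := by
    intro h
    exact ((mem_condSet τ a Y a).1 h).2.1 rfl
  have hYC : Y ∉ condSet τ a Y := by
    intro h
    exact ((mem_condSet τ a Y Y).1 h).1 rfl
  exact hC.1.1 Y a _ (sink_local_markov C hC π Y hsinkπ (condSet τ a Y) hpaT a haC haY hYC)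


end GSP
end

section
/- Lemma 28, non-adjacent case (marginalization of undirected graphs induced by d-connection): Let G be a DAG on [p], S ⊆ [p], k ∈ S, and let i, j ∈ S\{k} be distinct. Suppose i and k are d-separated given S\{i,k} in G. Then i and j are d-connected given S\{i,j} in G if and only if i and j are d-connected given S\{i,j,k} in G. -/
open scoped Classical

/-! A d-connecting walk can be grown one edge at a time, since the rule at an internal node
depends only on the orientation of its two edges; and every collider may be assumed to lie in the
conditioning set itself, replacing a collider with a descendant `d` in the set by the detour down
to `d` and back. Grow such a walk from `i` towards `j`. The sets `S \ {i,j}`, `S \ {i,j,k}` and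
`S \ {i,k}` differ only at `j` and `k`, so a walk open given one of the first two stays open given
the other two until it first reaches `j` or `k`; reaching `k` would d-connect `i` and `k` given
`S \ {i,k}`, so it reaches `j`. -/

namespace GSP.DAG

variable {p : ℕ} {G : DAG p} {A B C : Finset (Fin p)}

lemma Arrow.asymm {a b : Fin p} (h : G.Arrow a b) : ¬ G.Arrow b a := fun h' =>
  G.acyclic a (Relation.TransGen.head h (Relation.TransGen.single h'))

lemma DConnWalk.tail {x : Fin p} {l : List (Fin p)} (h : G.DConnWalk A (x :: l)) :
    G.DConnWalk A l := by
  refine ⟨h.1.tail, fun m hm hlen => ?_⟩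
  obtain ⟨n, rfl⟩ : ∃ n, m = n + 1 := ⟨m - 1, by omega⟩
  simpa using h.2 (n + 2) (by omega) (by simpa using hlen)

lemma DConnWalk.pair {x y : Fin p} (h : G.Adj x y) : G.DConnWalk A [x, y] :=
  ⟨List.isChain_pair.2 h, fun m hm hlen => by simp at hlen; omega⟩

lemma DConnWalk.cons {x y : Fin p} {l : List (Fin p)} (h : G.DConnWalk A (y :: l))
    (hxy : G.Adj x y)
    (hy : ∀ z, l.head? = some z →
      (G.Collider x y z → ∃ d ∈ A, G.Desc y d) ∧ (¬ G.Collider x y z → y ∉ A)) :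
    G.DConnWalk A (x :: y :: l) := by
  refine ⟨List.isChain_cons_cons.2 ⟨hxy, h.1⟩, fun m hm hlen => ?_⟩
  match m, l with
  | 1, z :: _ => simpa using hy z rfl
  | n + 2, _ => simpa using h.2 (n + 1) (by omega) (by simp at hlen ⊢; omega)

lemma DConnWalk.reverse {l : List (Fin p)} (h : G.DConnWalk A l) :
    G.DConnWalk A l.reverse := by
  refine ⟨List.isChain_reverse.2 (h.1.imp fun _ _ hab => hab.symm), fun m hm hlen => ?_⟩
  have hlen' : m + 1 < l.length := by simpa using hlen
  have key := h.2 (l.length - 1 - m) (by omega) (by omega)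
  simp only [List.get_eq_getElem, List.getElem_reverse] at key ⊢
  have e1 : l.length - 1 - (m - 1) = l.length - 1 - m + 1 := by omega
  have e3 : l.length - 1 - (m + 1) = l.length - 1 - m - 1 := by omega
  simp only [e1, e3]
  exact ⟨fun hc => key.1 ⟨hc.2, hc.1⟩, fun hc => key.2 fun hc' => hc ⟨hc'.2, hc'.1⟩⟩

lemma DConn.symm {a b : Fin p} (h : G.DConn a b A) : G.DConn b a A := by
  obtain ⟨l, hhead, hlast, hl⟩ := h
  exact ⟨l.reverse, by rwa [List.head?_reverse], by rwa [List.getLast?_reverse], hl.reverse⟩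

lemma dconn_comm {a b : Fin p} : G.DConn a b A ↔ G.DConn b a A :=
  ⟨DConn.symm, DConn.symm⟩

/-- `G.DReach A i y into`: some walk from `i` to `y` has all its internal colliders in `A` and
all its internal non-colliders outside `A`; `into` records whether its last edge points into `y`. -/
inductive DReach (G : DAG p) (A : Finset (Fin p)) (i : Fin p) : Fin p → Bool → Prop
  | single_in {y} : G.Arrow i y → DReach G A i y true
  | single_out {y} : G.Arrow y i → DReach G A i y false
  | cons_in {y b z} : DReach G A i y b → G.Arrow y z → y ∉ A → DReach G A i z true
  | cons_collider {y z} : DReach G A i y true → G.Arrow z y → y ∈ A → DReach G A i z false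
  | cons_out {y z} : DReach G A i y false → G.Arrow z y → y ∉ A → DReach G A i z false

namespace DReach

variable {i : Fin p}

lemma mem_or_dReach_false_of_desc {d u : Fin p} (hd : d ∈ A) (hud : G.Desc u d)
    (h : G.DReach A i u true) : u ∈ A ∨ G.DReach A i u false := by
  induction hud using Relation.ReflTransGen.head_induction_on with
  | refl => exact .inl hd
  | @head u c huc _ ih =>
    by_cases hu : u ∈ A
    · exact .inl hu
    have hc := h.cons_in huc hu
    by_cases hcA : c ∈ A
    · exact .inr (hc.cons_collider huc hcA)
    · exact .inr ((ih hc).resolve_left hcA |>.cons_out huc hcA)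

lemma cons_collider_of_desc {y z : Fin p} (h : G.DReach A i y true) (hzy : G.Arrow z y)
    (hy : ∃ d ∈ A, G.Desc y d) : G.DReach A i z false := by
  by_cases hyA : y ∈ A
  · exact h.cons_collider hzy hyA
  obtain ⟨d, hd, hyd⟩ := hy
  exact ((mem_or_dReach_false_of_desc hd hyd h).resolve_left hyA).cons_out hzy hyA

lemma exists_walk {y : Fin p} {b : Bool} (h : G.DReach A i y b) :
    ∃ z l, G.DConnWalk A (y :: z :: l) ∧ (y :: z :: l).getLast? = some i ∧
      (b = true → G.Arrow z y) ∧ (b = false → G.Arrow y z) := by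
  induction h with
  | single_in h =>
    exact ⟨i, [], DConnWalk.pair (.inr h), rfl, fun _ => h, by simp⟩
  | single_out h =>
    exact ⟨i, [], DConnWalk.pair (.inl h), rfl, by simp, fun _ => h⟩
  | cons_in _ hyz hy ih =>
    obtain ⟨w, l, hl, hlast, -⟩ := ih
    refine ⟨_, w :: l, hl.cons (.inr hyz) ?_, by simpa using hlast, fun _ => hyz, by simp⟩
    rintro _ ⟨⟩
    exact ⟨fun hc => absurd hc.1 hyz.asymm, fun _ => hy⟩
  | cons_collider _ hzy hy ih =>
    obtain ⟨w, l, hl, hlast, hw, -⟩ := ih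
    refine ⟨_, w :: l, hl.cons (.inl hzy) ?_, by simpa using hlast, by simp, fun _ => hzy⟩
    rintro _ ⟨⟩
    exact ⟨fun _ => ⟨_, hy, .refl⟩, fun hc => absurd ⟨hzy, hw rfl⟩ hc⟩
  | cons_out _ hzy hy ih =>
    obtain ⟨w, l, hl, hlast, -, hw⟩ := ih
    refine ⟨_, w :: l, hl.cons (.inl hzy) ?_, by simpa using hlast, by simp, fun _ => hzy⟩
    rintro _ ⟨⟩
    exact ⟨fun hc => absurd hc.2 (hw rfl).asymm, fun _ => hy⟩

lemma dconn {y : Fin p} {b : Bool} (h : G.DReach A i y b) : G.DConn y i A := by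
  obtain ⟨z, l, hl, hlast, -⟩ := h.exists_walk
  exact ⟨_, rfl, hlast, hl⟩

end DReach

lemma DConnWalk.exists_dReach {i : Fin p} {l : List (Fin p)} :
    ∀ {z w : Fin p}, G.DConnWalk A (z :: w :: l) → (z :: w :: l).getLast? = some i →
      ∃ b, G.DReach A i z b ∧ (b = true → G.Arrow w z) ∧ (b = false → G.Arrow z w) := by
  induction l with
  | nil =>
    intro z w h hlast
    obtain rfl : w = i := by simpa using hlast
    rcases (List.isChain_cons_cons.1 h.1).1 with hzw | hwz
    · exact ⟨false, .single_out hzw, by simp, fun _ => hzw⟩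
    · exact ⟨true, .single_in hwz, fun _ => hwz, by simp⟩
  | cons v l ih =>
    intro z w h hlast
    obtain ⟨b, hw, hwv, hvw⟩ := ih h.tail (by simpa using hlast)
    have hrule : (G.Collider z w v → ∃ d ∈ A, G.Desc w d) ∧
        (¬ G.Collider z w v → w ∉ A) := by simpa using h.2 1 le_rfl (by simp)
    rcases (List.isChain_cons_cons.1 h.1).1 with hzw | hwz
    · refine ⟨false, ?_, by simp, fun _ => hzw⟩
      cases b
      · exact hw.cons_out hzw (hrule.2 fun hc => (hvw rfl).asymm hc.2)
      · exact hw.cons_collider_of_desc hzw (hrule.1 ⟨hzw, hwv rfl⟩)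
    · exact ⟨true, hw.cons_in hwz (hrule.2 fun hc => hwz.asymm hc.1), fun _ => hwz, by simp⟩

lemma dconn_iff_eq_or_dReach {y i : Fin p} :
    G.DConn y i A ↔ y = i ∨ ∃ b, G.DReach A i y b := by
  refine ⟨fun ⟨l, hhead, hlast, hl⟩ => ?_, ?_⟩
  · match l, hhead with
    | [_], rfl => exact .inl (by simpa using hlast)
    | _ :: _ :: _, rfl => exact .inr ((hl.exists_dReach hlast).imp fun _ h => h.1)
  · rintro (rfl | ⟨b, h⟩)
    · exact ⟨[y], rfl, rfl, List.isChain_singleton y, fun m hm hlen => by simp at hlen⟩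
    · exact h.dconn

lemma DReach.transfer {i j k y : Fin p} {b : Bool}
    (hB : ∀ y, y ≠ j → y ≠ k → (y ∈ A ↔ y ∈ B))
    (hC : ∀ y, y ≠ j → y ≠ k → (y ∈ A ↔ y ∈ C)) (hk : ∀ b, ¬ G.DReach C i k b)
    (h : G.DReach A i y b) :
    (G.DReach B i y b ∧ G.DReach C i y b) ∨ ∃ b', G.DReach B i j b' := by
  have agree : ∀ {y b}, G.DReach B i y b → G.DReach C i y b →
      y = j ∨ ((y ∈ A ↔ y ∈ B) ∧ (y ∈ A ↔ y ∈ C)) := fun {y b} _ hyC => by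
    by_cases hyj : y = j
    · exact .inl hyj
    have hyk : y ≠ k := by rintro rfl; exact hk b hyC
    exact .inr ⟨hB y hyj hyk, hC y hyj hyk⟩
  induction h with
  | single_in h => exact .inl ⟨.single_in h, .single_in h⟩
  | single_out h => exact .inl ⟨.single_out h, .single_out h⟩
  | cons_in _ hyz hy ih =>
    obtain ⟨hyB, hyC⟩ | hj := ih
    · rcases agree hyB hyC with rfl | ⟨eB, eC⟩
      · exact .inr ⟨_, hyB⟩
      · exact .inl ⟨hyB.cons_in hyz (mt eB.2 hy), hyC.cons_in hyz (mt eC.2 hy)⟩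
    · exact .inr hj
  | cons_collider _ hzy hy ih =>
    obtain ⟨hyB, hyC⟩ | hj := ih
    · rcases agree hyB hyC with rfl | ⟨eB, eC⟩
      · exact .inr ⟨_, hyB⟩
      · exact .inl ⟨hyB.cons_collider hzy (eB.1 hy), hyC.cons_collider hzy (eC.1 hy)⟩
    · exact .inr hj
  | cons_out _ hzy hy ih =>
    obtain ⟨hyB, hyC⟩ | hj := ih
    · rcases agree hyB hyC with rfl | ⟨eB, eC⟩
      · exact .inr ⟨_, hyB⟩
      · exact .inl ⟨hyB.cons_out hzy (mt eB.2 hy), hyC.cons_out hzy (mt eC.2 hy)⟩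
    · exact .inr hj

lemma exists_dReach_transfer {i j k : Fin p}
    (hB : ∀ y, y ≠ j → y ≠ k → (y ∈ A ↔ y ∈ B))
    (hC : ∀ y, y ≠ j → y ≠ k → (y ∈ A ↔ y ∈ C)) (hk : ∀ b, ¬ G.DReach C i k b)
    (h : ∃ b, G.DReach A i j b) : ∃ b, G.DReach B i j b :=
  let ⟨b, h⟩ := h
  (h.transfer hB hC hk).elim (fun h' => ⟨b, h'.1⟩) id

end GSP.DAG

namespace GSP

theorem marginalization_nonadjacent_case_general
    (p : ℕ) (G : DAG p) (S : Finset (Fin p)) (k : Fin p)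
    (i j : Fin p)
    (hsep : G.DSep i k ((S.erase i).erase k)) :
    G.DConn i j ((S.erase i).erase j) ↔
      G.DConn i j (((S.erase i).erase j).erase k) := by
  have hk : ∀ b, ¬ G.DReach ((S.erase i).erase k) i k b := fun _ h => hsep h.dconn.symm
  rw [DAG.dconn_comm, DAG.dconn_iff_eq_or_dReach, DAG.dconn_comm,
    DAG.dconn_iff_eq_or_dReach]
  refine or_congr_right
    ⟨DAG.exists_dReach_transfer ?_ ?_ hk, DAG.exists_dReach_transfer ?_ ?_ hk⟩ <;>
    intro y hyj hyk <;> simp [hyj, hyk]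

/-- Lemma 28, non-adjacent case: let `S ⊆ [p]`, `k ∈ S`, and
let `i, j ∈ S \ {k}` be distinct. If `i` and `k` are d-separated given
`S \ {i,k}`, then `i` and `j` are d-connected given `S \ {i,j}` iff they are
d-connected given `S \ {i,j,k}`. -/
theorem marginalization_nonadjacent_case
    (p : ℕ) (G : DAG p) (S : Finset (Fin p)) (k : Fin p) (hk : k ∈ S)
    (i j : Fin p) (hi : i ∈ S) (hj : j ∈ S)
    (hik : i ≠ k) (hjk : j ≠ k) (hij : i ≠ j)
    (hsep : G.DSep i k ((S.erase i).erase k)) :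
    G.DConn i j ((S.erase i).erase j) ↔
      G.DConn i j (((S.erase i).erase j).erase k) :=
  marginalization_nonadjacent_case_general p G S k i j hsep

end GSP
end

section
/- Lemma 28, fill-in case: Let G be a DAG on [p], S ⊆ [p], k ∈ S, and let i, j ∈ S\{k} be distinct. Suppose i and k are d-connected given S\{i,k} in G, j and k are d-connected given S\{j,k} in G, and i and j are d-separated given S\{i,j} in G. Then i and j are d-connected given S\{i,j,k} in G. -/
open scoped Classical

/-!
Put `T = S \ {i, j, k}`, so that the three conditioning sets of the hypotheses are `T ∪ {j}`,
`T ∪ {i}` and `T ∪ {k}`. If some collider on the `i`–`k` walk has a descendant in `T ∪ {j}` but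
none in `T`, then `j` is a descendant of the first such collider, and the walk up to it followed by
a directed path down to `j` d-connects `i` and `j` given `T`; symmetrically for the `j`–`k` walk.
Otherwise every collider on either walk has a descendant in `T`. Cut both walks at their first
visit to `k` and glue them there. If `k` is a non-collider of the glued walk, it d-connects `i`
and `j` given `T`; if `k` is a collider, it d-connects them given `T ∪ {k} = S \ {i, j}`,
which is excluded.
-/

namespace GSP

def TripleChain {α : Type*} (P : α → α → α → Prop) : List α → Prop
  | a :: b :: c :: l => P a b c ∧ TripleChain P (b :: c :: l)
  | _ => True

namespace TripleChain

variable {α : Type*} {P Q : α → α → α → Prop}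

theorem imp_of_mem_dropLast :
    ∀ {l : List α}, (∀ a b c, b ∈ l.dropLast → P a b c → Q a b c) →
      TripleChain P l → TripleChain Q l
  | _ :: _ :: _ :: _, h, ⟨habc, hl⟩ =>
    ⟨h _ _ _ (by simp) habc, imp_of_mem_dropLast (fun a b c hb => h a b c (by simp_all)) hl⟩
  | [], _, _ | [_], _, _ | [_, _], _, _ => trivial

theorem imp (h : ∀ a b c, P a b c → Q a b c) {l : List α} :
    TripleChain P l → TripleChain Q l :=
  imp_of_mem_dropLast fun a b c _ => h a b c

theorem of_append_left : ∀ {l₁ l₂ : List α}, TripleChain P (l₁ ++ l₂) → TripleChain P l₁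
  | _ :: _ :: _ :: _, _, ⟨habc, hl⟩ => ⟨habc, of_append_left hl⟩
  | [], _, _ | [_], _, _ | [_, _], _, _ => trivial

theorem append {a b : α} : ∀ {u v : List α},
    TripleChain P (u ++ [a, b]) → TripleChain P (a :: b :: v) → TripleChain P (u ++ a :: b :: v)
  | [], _, _, h => h
  | [_], _, h, h' => ⟨h.1, h'⟩
  | [_, _], _, h, h' => ⟨h.1, h.2.1, h'⟩
  | _ :: y :: z :: u, _, h, h' => ⟨h.1, append (u := y :: z :: u) h.2 h'⟩

theorem reverse : ∀ {l : List α}, TripleChain P l → TripleChain (fun a b c => P c b a) l.reverse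
  | a :: b :: c :: l, ⟨habc, hl⟩ => by
    simpa using append (u := l.reverse) (v := [a]) (by simpa using reverse hl) ⟨habc, trivial⟩
  | [], _ | [_], _ | [_, _], _ => trivial

theorem iff_getElem : ∀ {l : List α},
    TripleChain P l ↔ ∀ t (h : t + 2 < l.length), P l[t] l[t + 1] l[t + 2]
  | a :: b :: c :: l => by
    rw [TripleChain, iff_getElem]
    constructor
    · rintro ⟨habc, hl⟩ (_ | t) ht
      · exact habc
      · exact hl t (by simp at ht ⊢; omega)
    · intro h
      exact ⟨h 0 (by simp), fun t ht => h (t + 1) (by simp at ht ⊢; omega)⟩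
  | [] | [_] | [_, _] => by simp [TripleChain]

theorem or_exists_first_not : ∀ {l : List α}, TripleChain P l →
    TripleChain Q l ∨ ∃ u a b c v, l = u ++ a :: b :: c :: v ∧
      TripleChain Q (u ++ [a, b]) ∧ P a b c ∧ ¬ Q a b c
  | a :: b :: c :: l, ⟨habc, hl⟩ => by
    by_cases hq : Q a b c
    · rcases or_exists_first_not hl with hl | ⟨u, x, y, z, v, hbc, hu, hxyz⟩
      · exact .inl ⟨hq, hl⟩
      · refine .inr ⟨a :: u, x, y, z, v, by rw [hbc]; rfl, ?_, hxyz⟩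
        rcases u with _ | ⟨u₀, _ | ⟨u₁, u⟩⟩ <;> simp at hbc <;> grind [TripleChain]
    · exact .inr ⟨[], a, b, c, l, rfl, trivial, habc, hq⟩
  | [], _ | [_], _ | [_, _], _ => .inl trivial

end TripleChain

namespace DAG

variable {p : ℕ} (G : DAG p)

/-- `G.DConnWalk T` is the case `W₁ = W₂ = T` (`dConnWalk_iff`); separating the two sets lets the
blocking set grow while the collider witnesses stay in `T`. -/
def OpenTriple (W₁ W₂ : Finset (Fin p)) (a b c : Fin p) : Prop :=
  (G.Collider a b c → ∃ d ∈ W₁, G.Desc b d) ∧ (¬ G.Collider a b c → b ∉ W₂)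

def IsOpenWalk (W₁ W₂ : Finset (Fin p)) (l : List (Fin p)) : Prop :=
  l.IsChain G.Adj ∧ TripleChain (G.OpenTriple W₁ W₂) l

variable {G} {T W₁ W₂ W₁' W₂' : Finset (Fin p)} {a b c k x y : Fin p} {l u v : List (Fin p)}

theorem OpenTriple.mono (h₁ : W₁ ⊆ W₁') (h₂ : W₂' ⊆ W₂) (h : G.OpenTriple W₁ W₂ a b c) :
    G.OpenTriple W₁' W₂' a b c :=
  ⟨fun hc => (h.1 hc).imp fun _ hd => ⟨h₁ hd.1, hd.2⟩, fun hn hb => h.2 hn (h₂ hb)⟩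

theorem OpenTriple.symm (h : G.OpenTriple W₁ W₂ a b c) : G.OpenTriple W₁ W₂ c b a :=
  ⟨fun hc => h.1 ⟨hc.2, hc.1⟩, fun hn => h.2 fun hc => hn ⟨hc.2, hc.1⟩⟩

theorem dConnWalk_iff : G.DConnWalk T l ↔ G.IsOpenWalk T T l := by
  rw [DConnWalk, IsOpenWalk, TripleChain.iff_getElem, List.Chain']
  refine and_congr_right fun _ => ⟨fun h t ht => h (t + 1) (by omega) ht, fun h m hm hl => ?_⟩
  obtain ⟨t, rfl⟩ : ∃ t, m = t + 1 := ⟨m - 1, by omega⟩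
  exact h t hl

theorem IsOpenWalk.mono (h₁ : W₁ ⊆ W₁') (h₂ : W₂' ⊆ W₂) (h : G.IsOpenWalk W₁ W₂ l) :
    G.IsOpenWalk W₁' W₂' l :=
  ⟨h.1, h.2.imp fun _ _ _ => OpenTriple.mono h₁ h₂⟩

theorem IsOpenWalk.reverse (h : G.IsOpenWalk W₁ W₂ l) : G.IsOpenWalk W₁ W₂ l.reverse :=
  ⟨List.isChain_reverse.2 (h.1.imp fun _ _ hab => hab.symm),
    h.2.reverse.imp fun _ _ _ => OpenTriple.symm⟩

theorem IsOpenWalk.append (h₁ : G.IsOpenWalk W₁ W₂ (u ++ [a, b]))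
    (h₂ : G.IsOpenWalk W₁ W₂ (a :: b :: v)) : G.IsOpenWalk W₁ W₂ (u ++ a :: b :: v) :=
  ⟨by simpa using h₁.1.append_overlap (l₂ := [a, b]) (l₃ := v) h₂.1 (by simp),
    h₁.2.append h₂.2⟩

theorem IsOpenWalk.of_append_left (h : G.IsOpenWalk W₁ W₂ (u ++ v)) : G.IsOpenWalk W₁ W₂ u :=
  ⟨h.1.prefix (List.prefix_append u v), h.2.of_append_left⟩

theorem isOpenWalk_of_isChain_arrow :
    ∀ {a : Fin p} {l : List (Fin p)}, (a :: l).IsChain G.Arrow → (∀ y ∈ l, y ∉ W₂) →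
      G.IsOpenWalk W₁ W₂ (a :: l)
  | _, [], _, _ => ⟨.singleton _, trivial⟩
  | _, [_], h, _ => ⟨h.imp fun _ _ => Or.inl, trivial⟩
  | a, b :: c :: l, h, hW => by
    obtain ⟨hab, hbc⟩ := List.isChain_cons_cons.1 h
    have hnc : ¬ G.Collider a b c := fun hcol =>
      G.acyclic b (.head (List.isChain_cons_cons.1 hbc).1 (.single hcol.2))
    exact ⟨h.imp fun _ _ => Or.inl, ⟨fun hcol => (hnc hcol).elim, fun _ => hW b (by simp)⟩,
      (isOpenWalk_of_isChain_arrow hbc fun y hy => hW y (by simp_all)).2⟩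

theorem DConn.symm_s12 (h : G.DConn x y T) : G.DConn y x T := by
  obtain ⟨l, hx, hy, hl⟩ := h
  refine ⟨l.reverse, by simpa using hy, by simpa using hx, ?_⟩
  exact dConnWalk_iff.2 (dConnWalk_iff.1 hl).reverse

theorem IsOpenWalk.dConn_or_isOpenWalk {t : Fin p}
    (hl : G.IsOpenWalk (insert t T) (insert t T) l) (hx : l.head? = some x) :
    G.DConn x t T ∨ G.IsOpenWalk T (insert t T) l := by
  rcases hl.2.or_exists_first_not (Q := G.OpenTriple T (insert t T))
    with h | ⟨u, a, b, c, v, rfl, hu, hopen, hnot⟩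
  · exact .inr ⟨hl.1, h⟩
  left
  have hcol : G.Collider a b c := by_contra fun hn => hnot ⟨fun h => (hn h).elim, hopen.2⟩
  have hbT : ∀ d ∈ T, ¬ G.Desc b d :=
    fun d hd hbd => hnot ⟨fun _ => ⟨d, hd, hbd⟩, fun hn => (hn hcol).elim⟩
  obtain ⟨d, hd, hbd⟩ := hopen.1 hcol
  obtain rfl : d = t := (Finset.mem_insert.1 hd).resolve_right fun hdT => hbT d hdT hbd
  obtain ⟨q, hq, hqd⟩ := List.exists_isChain_cons_of_relationReflTransGen hbd
  have hdesc : ∀ y ∈ b :: q, G.Desc b y :=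
    hq.induction _ _ (fun _ _ hxy hx => hx.tail hxy) (fun _ => .refl)
  refine ⟨u ++ a :: b :: q, by cases u <;> simp_all, ?_, dConnWalk_iff.2 ?_⟩
  · rw [← hqd, ← List.getLast?_eq_some_getLast]
    simp [List.getLast?_cons]
  · have hpre : G.IsOpenWalk T (insert d T) (u ++ [a, b]) := ⟨hl.1.prefix ⟨c :: v, by simp⟩, hu⟩
    refine (hpre.mono subset_rfl (Finset.subset_insert _ _)).append ?_
    exact isOpenWalk_of_isChain_arrow (hq.cons_cons hcol.1) fun y hy hyT => hbT y hyT (hdesc y hy)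

theorem IsOpenWalk.exists_prefix_insert (hl : G.IsOpenWalk W₁ W₂ l) (hx : l.head? = some x)
    (hk : l.getLast? = some k) (hxk : x ≠ k) :
    ∃ u a, (u ++ [a, k]).head? = some x ∧ G.IsOpenWalk W₁ (insert k W₂) (u ++ [a, k]) := by
  obtain ⟨s, t, rfl, hks⟩ := List.eq_append_cons_of_mem (List.mem_of_getLast? hk)
  obtain ⟨u, a, rfl⟩ : ∃ u a, s = u ++ [a] := by
    rcases List.eq_nil_or_concat' s with rfl | hs
    · simp_all
    · exact hs
  have hpre : G.IsOpenWalk W₁ W₂ (u ++ [a, k]) :=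
    IsOpenWalk.of_append_left (v := t) (by simpa using hl)
  refine ⟨u, a, by cases u <;> simp_all, hpre.1, hpre.2.imp_of_mem_dropLast fun _ b _ hb h => ?_⟩
  have hbk : b ≠ k := by rintro rfl; simp_all
  exact ⟨h.1, fun hn => by simpa [hbk] using h.2 hn⟩

theorem dConn_of_join (h₁ : G.IsOpenWalk T T (u ++ [a, k])) (hx : (u ++ [a, k]).head? = some x)
    (h₂ : G.IsOpenWalk T T (v ++ [b, k])) (hy : (v ++ [b, k]).head? = some y)
    (hk : G.OpenTriple T T a k b) : G.DConn x y T := by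
  have h₂' : G.IsOpenWalk T T (k :: b :: v.reverse) := by simpa using h₂.reverse
  refine ⟨u ++ a :: k :: b :: v.reverse, by cases u <;> simp_all, ?_, dConnWalk_iff.2 ?_⟩
  · cases v <;> simp_all [List.getLast?_cons]
  · exact h₁.append ⟨.cons_cons (List.isChain_pair.1 h₁.1.right_of_append) h₂'.1, hk, h₂'.2⟩

end DAG

/-- Lemma 28, fill-in case: let `S ⊆ [p]`, `k ∈ S`, and let
`i, j ∈ S \ {k}` be distinct. If `i` and `k` are d-connected given `S \ {i,k}`,
`j` and `k` are d-connected given `S \ {j,k}`, and `i` and `j` are d-separated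
given `S \ {i,j}`, then `i` and `j` are d-connected given `S \ {i,j,k}`. -/
theorem marginalization_fill_in_case
    (p : ℕ) (G : DAG p) (S : Finset (Fin p)) (k : Fin p) (hk : k ∈ S)
    (i j : Fin p) (hi : i ∈ S) (hj : j ∈ S)
    (hik : i ≠ k) (hjk : j ≠ k) (hij : i ≠ j)
    (hconik : G.DConn i k ((S.erase i).erase k))
    (hconjk : G.DConn j k ((S.erase j).erase k))
    (hsepij : G.DSep i j ((S.erase i).erase j)) :
    G.DConn i j (((S.erase i).erase j).erase k) := by
  set T := ((S.erase i).erase j).erase k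
  rw [show (S.erase i).erase k = insert j T by ext; simp [T]; grind] at hconik
  rw [show (S.erase j).erase k = insert i T by ext; simp [T]; grind] at hconjk
  rw [show (S.erase i).erase j = insert k T by ext; simp [T]; grind] at hsepij
  obtain ⟨l₁, hi₁, hk₁, hw₁⟩ := hconik
  obtain ⟨l₂, hj₂, hk₂, hw₂⟩ := hconjk
  rcases (DAG.dConnWalk_iff.1 hw₁).dConn_or_isOpenWalk hi₁ with h | hw₁
  · exact h
  rcases (DAG.dConnWalk_iff.1 hw₂).dConn_or_isOpenWalk hj₂ with h | hw₂
  · exact h.symm_s12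
  obtain ⟨u, a, hu, hw₁⟩ := hw₁.exists_prefix_insert hi₁ hk₁ hik
  obtain ⟨v, b, hv, hw₂⟩ := hw₂.exists_prefix_insert hj₂ hk₂ hjk
  have hT : ∀ z, T ⊆ insert k (insert z T) :=
    fun z => (Finset.subset_insert z T).trans (Finset.subset_insert k _)
  have hC : ∀ z, insert k T ⊆ insert k (insert z T) :=
    fun z => Finset.insert_subset_insert k (Finset.subset_insert z T)
  by_cases hcol : G.Collider a k b
  · exact absurd (DAG.dConn_of_join (hw₁.mono (Finset.subset_insert k T) (hC j)) hu
      (hw₂.mono (Finset.subset_insert k T) (hC i)) hv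
      ⟨fun _ => ⟨k, Finset.mem_insert_self k T, .refl⟩, fun hn => (hn hcol).elim⟩) hsepij
  · exact DAG.dConn_of_join (hw₁.mono subset_rfl (hT j)) hu (hw₂.mono subset_rfl (hT i)) hv
      ⟨fun h => (hcol h).elim, fun _ => Finset.notMem_erase k _⟩

end GSP
end

section
/- Lemma 30 (subDAG lemma): Let C be a graphoid of CI relations on [p] and let G_τ be a minimal I-MAP with respect to C. Let G be a DAG that is Markov equivalent to G_τ and is obtained from G_τ by reversing a single covered arrow of G_τ. Then for every linear extension π of G, the minimal I-MAP G_π is a subDAG of G; that is, every arrow of G_π is an arrow of G. -/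
open scoped Classical

/-!
Swapping two consecutive nodes `u, v` of an ordering `π` leaves the minimal I-MAP `G_π`
unchanged unless `u → v` is an arrow of `G_π`: contraction and intersection transfer each CI
statement across the swap. Hence if `G_{π₀} ⊆ H` and `π₀`, `π` are linear extensions of `H`,
bubble-sorting `π` into `π₀` through linear extensions of `H` never swaps the endpoints of an
arrow of `H`, and `G_π = G_{π₀}`.

With `H = G_τ` this gives `G_σ = G_τ` for a linear extension `σ` of `G_τ` in which `a`
immediately precedes `b`. Swapping `a` and `b` in `σ` yields a linear extension `ρ` of `G`, and
because `a → b` is covered, `G_ρ ⊆ G`. With `H = G` and `π₀ = ρ` we get `G_π = G_ρ ⊆ G`.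
-/

namespace GSP

open Equiv Finset

variable {p : ℕ}

theorem DAG.ext : ∀ {G H : DAG p}, G.arrows = H.arrows → G = H
  | ⟨_, _⟩, ⟨_, _⟩, rfl => rfl

theorem DAG.mem_parents {G : DAG p} {x y : Fin p} : x ∈ G.parents y ↔ (x, y) ∈ G.arrows :=
  Finset.mem_filter.trans (and_iff_right (Finset.mem_univ x))

section Graphoid
variable {C : Set (CIRel p)}

theorem Graphoid.insert_cond_mem_iff (hC : Graphoid C) {x y w : Fin p} {S : Finset (Fin p)}
    (h : (y, w, insert x S) ∈ C) : (x, y, insert w S) ∈ C ↔ (x, y, S) ∈ C := by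
  obtain ⟨⟨hsymm, hsg⟩, hint⟩ := hC
  constructor
  · intro hxy
    exact hsymm _ _ _ (hint y x w S (hsymm _ _ _ hxy) h).1
  · intro hxy
    exact hsymm _ _ _ (hsg y x w S (hsymm _ _ _ hxy) h).2

end Graphoid

section Before
variable {π : Perm (Fin p)} {u v x y k : Fin p}

noncomputable def before (π : Perm (Fin p)) (y : Fin p) : Finset (Fin p) :=
  univ.filter fun k => π.symm k < π.symm y

@[simp]
theorem mem_before : k ∈ before π y ↔ π.symm k < π.symm y := by
  simp [before]

theorem notMem_before_self : y ∉ before π y := by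
  simp

theorem condSet_eq_erase_before : condSet π x y = (before π y).erase x := by
  ext k
  simp only [condSet, mem_erase, mem_filter, mem_univ, true_and, mem_before,
    lt_iff_le_and_ne, ne_eq, π.symm.injective.eq_iff]
  tauto

theorem mem_minimalIMAP {C : Set (CIRel p)} :
    (x, y) ∈ (minimalIMAP C π).arrows ↔ x ∈ before π y ∧ (x, y, (before π y).erase x) ∉ C := by
  simp [minimalIMAP, mkDAG, condSet_eq_erase_before]

theorem isLinExt_minimalIMAP (C : Set (CIRel p)) (π : Perm (Fin p)) :
    IsLinExt (minimalIMAP C π) π :=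
  fun _ _ h => mem_before.1 (mem_minimalIMAP.1 h).1

@[simp]
theorem symm_swap_mul_apply_left : (swap u v * π).symm u = π.symm v :=
  congrArg π.symm (swap_apply_left u v)

@[simp]
theorem symm_swap_mul_apply_right : (swap u v * π).symm v = π.symm u :=
  congrArg π.symm (swap_apply_right u v)

theorem before_of_covBy (h : π.symm u ⋖ π.symm v) : before π v = insert u (before π u) := by
  ext k
  simp only [mem_before, mem_insert, h.lt_iff_le_left, le_iff_eq_or_lt, π.symm.injective.eq_iff]

theorem before_swap_mul_left (h : π.symm u ⋖ π.symm v) :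
    before (swap u v * π) u = insert v (before π u) := by
  ext k
  simp only [mem_before, mem_insert]
  change π.symm (swap u v k) < π.symm (swap u v u) ↔ _
  rw [swap_apply_left, swap_apply_def]
  split_ifs with hku hkv
  · subst hku
    simp [π.symm.injective.ne_iff.1 h.lt.ne]
  · subst hkv
    simp [h.lt]
  · rw [h.lt_iff_le_left, le_iff_eq_or_lt, π.symm.injective.eq_iff]
    simp [hku, hkv]

theorem before_swap_mul_right (h : π.symm u ⋖ π.symm v) :
    before (swap u v * π) v = before π u := by
  ext k
  simp only [mem_before]
  change π.symm (swap u v k) < π.symm (swap u v v) ↔ _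
  rw [swap_apply_right, swap_apply_def]
  split_ifs with hku hkv
  · subst hku
    simp [h.lt.not_gt]
  · subst hkv
    simp [h.lt.not_gt]
  · rfl

theorem before_swap_mul_of_ne (hyu : y ≠ u) (hyv : y ≠ v) (h : π.symm u ⋖ π.symm v) :
    before (swap u v * π) y = before π y := by
  have hv : π.symm v < π.symm y ↔ π.symm u < π.symm y := by
    rw [h.lt_iff_le_right, le_iff_eq_or_lt, π.symm.injective.eq_iff]
    simp [hyv.symm]
  ext k
  simp only [mem_before]
  change π.symm (swap u v k) < π.symm (swap u v y) ↔ _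
  rw [swap_apply_of_ne_of_ne hyu hyv, swap_apply_def]
  split_ifs with hku hkv
  · subst hku
    exact hv
  · subst hkv
    exact hv.symm
  · rfl

theorem symm_swap_mul_lt_iff (h : π.symm u ⋖ π.symm v) (hxy : (x, y) ≠ (u, v))
    (hyx : (x, y) ≠ (v, u)) :
    (swap u v * π).symm x < (swap u v * π).symm y ↔ π.symm x < π.symm y := by
  simp only [← mem_before]
  rcases eq_or_ne y u with rfl | hyu
  · rw [before_swap_mul_left h, mem_insert, or_iff_right (by simpa using hyx)]
  rcases eq_or_ne y v with rfl | hyv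
  · rw [before_swap_mul_right h, before_of_covBy h, mem_insert, or_iff_right (by simpa using hxy)]
  · rw [before_swap_mul_of_ne hyu hyv h]

end Before

section Swap

variable {C : Set (CIRel p)} {π : Perm (Fin p)} {u v : Fin p}

theorem IsLinExt.swap_mul {H H' : DAG p} (hH : IsLinExt H π) (h : π.symm u ⋖ π.symm v)
    (hH' : H'.arrows ⊆ insert (v, u) (H.arrows.erase (u, v))) :
    IsLinExt H' (swap u v * π) := by
  intro x y hxy
  rcases mem_insert.1 (hH' hxy) with hvu | hxy
  · obtain ⟨rfl, rfl⟩ := Prod.mk.inj hvu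
    simpa using h.lt
  obtain ⟨hne, hxy⟩ := mem_erase.1 hxy
  have hlt := hH x y hxy
  refine (symm_swap_mul_lt_iff h hne ?_).2 hlt
  rintro ⟨⟩
  exact h.lt.not_gt hlt

theorem minimalIMAP_swap_mul_eq (hC : Graphoid C) (h : π.symm u ⋖ π.symm v)
    (huv : (u, v) ∉ (minimalIMAP C π).arrows) :
    minimalIMAP C (swap u v * π) = minimalIMAP C π := by
  have hC_uv : (u, v, before π u) ∈ C := by
    simpa [mem_minimalIMAP, before_of_covBy h, h.lt, erase_insert notMem_before_self] using huv
  refine DAG.ext (Finset.ext fun ⟨x, y⟩ => ?_)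
  rw [mem_minimalIMAP, mem_minimalIMAP]
  rcases eq_or_ne y u with rfl | hyu
  · rw [before_swap_mul_left h]
    rcases eq_or_ne x v with rfl | hxv
    · simp [hC.1.1 _ _ _ hC_uv, h.lt.not_gt]
    rw [mem_insert, or_iff_right hxv, erase_insert_of_ne hxv.symm]
    refine and_congr_right fun hx => not_congr (hC.insert_cond_mem_iff ?_)
    rwa [insert_erase hx]
  rcases eq_or_ne y v with rfl | hyv
  · rw [before_swap_mul_right h, before_of_covBy h]
    rcases eq_or_ne x u with rfl | hxu
    · simp [erase_insert notMem_before_self, hC_uv]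
    rw [mem_insert, or_iff_right hxu, erase_insert_of_ne hxu.symm]
    refine and_congr_right fun hx => not_congr (hC.insert_cond_mem_iff ?_).symm
    rw [insert_erase hx]
    exact hC.1.1 _ _ _ hC_uv
  · rw [before_swap_mul_of_ne hyu hyv h]

theorem minimalIMAP_swap_mul_subset (hC : Semigraphoid C) {a b : Fin p}
    (h : π.symm a ⋖ π.symm b)
    (hpa : (minimalIMAP C π).parents a = ((minimalIMAP C π).parents b).erase a) :
    (minimalIMAP C (swap a b * π)).arrows ⊆
      insert (b, a) ((minimalIMAP C π).arrows.erase (a, b)) := by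
  have hab : a ≠ b := π.symm.injective.ne_iff.1 h.lt.ne
  -- `x` is a parent of `a` iff it is a parent of `b`
  have key : ∀ x ∈ before π a,
      (x, a, (before π a).erase x) ∈ C ↔ (x, b, insert a ((before π a).erase x)) ∈ C := by
    intro x hx
    have hxa : x ≠ a := ne_of_mem_of_not_mem hx notMem_before_self
    have := congrArg (x ∈ ·) hpa
    simp only [DAG.mem_parents, mem_erase, mem_minimalIMAP, before_of_covBy h, mem_insert,
      erase_insert_of_ne hxa.symm, hx, hxa, true_and, or_true, ne_eq, not_false_eq_true,
      eq_iff_iff, not_iff_not] at this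
    exact this
  rintro ⟨x, y⟩ hxy
  rw [mem_minimalIMAP] at hxy
  obtain ⟨hx, hC_xy⟩ := hxy
  rcases eq_or_ne y a with rfl | hya
  · rw [before_swap_mul_left h] at hx hC_xy
    rcases eq_or_ne x b with rfl | hxb
    · exact mem_insert_self _ _
    rw [mem_insert, or_iff_right hxb] at hx
    rw [erase_insert_of_ne hxb.symm] at hC_xy
    refine mem_insert_of_mem (mem_erase.2 ⟨by simp [hab], mem_minimalIMAP.2 ⟨hx, fun hC_xa => ?_⟩⟩)
    exact hC_xy (hC.2 _ _ _ _ hC_xa ((key x hx).1 hC_xa)).2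
  rcases eq_or_ne y b with rfl | hyb
  · rw [before_swap_mul_right h] at hx hC_xy
    have hxa : x ≠ a := ne_of_mem_of_not_mem hx notMem_before_self
    refine mem_insert_of_mem (mem_erase.2 ⟨by simp [hxa], mem_minimalIMAP.2 ⟨?_, ?_⟩⟩)
    · rw [before_of_covBy h]
      exact mem_insert_of_mem hx
    · rw [before_of_covBy h, erase_insert_of_ne hxa.symm]
      exact fun hC_xb => hC_xy (hC.2 _ _ _ _ ((key x hx).2 hC_xb) hC_xb).1
  · rw [before_swap_mul_of_ne hya hyb h] at hx hC_xy
    exact mem_insert_of_mem (mem_erase.2 ⟨by simp [hyb], mem_minimalIMAP.2 ⟨hx, hC_xy⟩⟩)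

end Swap

section Inversions

variable {π₀ π : Perm (Fin p)}

noncomputable def inversions (π₀ π : Perm (Fin p)) : Finset (Fin p × Fin p) :=
  univ.filter fun e => π₀.symm e.1 < π₀.symm e.2 ∧ π.symm e.2 < π.symm e.1

theorem exists_covBy_inversion (h : π ≠ π₀) :
    ∃ u v, π.symm u ⋖ π.symm v ∧ π₀.symm v < π₀.symm u := by
  by_contra! hmono
  suffices hid : π₀.symm ∘ π = id by
    exact h (Equiv.ext fun i => by simpa using congrArg π₀ (congrFun hid i))
  refine StrictMono.eq_id (strictMono_of_lt_succ fun i hi => ?_)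
  have hcov := Order.covBy_succ_of_not_isMax hi
  refine (hmono (π i) (π (Order.succ i)) (by simpa using hcov)).lt_of_ne ?_
  simpa using hcov.lt.ne

theorem inversions_swap_mul_ssubset {u v : Fin p} (h : π.symm u ⋖ π.symm v)
    (hvu : π₀.symm v < π₀.symm u) : inversions π₀ (swap u v * π) ⊂ inversions π₀ π := by
  have hmem : (v, u) ∈ inversions π₀ π := by simp [inversions, hvu, h.lt]
  have hsub : inversions π₀ (swap u v * π) ⊆ inversions π₀ π := by
    rintro ⟨x, y⟩ hxy
    simp only [inversions, mem_filter, mem_univ, true_and] at hxy ⊢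
    have huv : (y, x) ≠ (u, v) := by
      rintro ⟨⟩
      exact h.lt.not_gt (by simpa using hxy.2)
    have hvu' : (y, x) ≠ (v, u) := by
      rintro ⟨⟩
      exact hvu.not_gt hxy.1
    exact ⟨hxy.1, (symm_swap_mul_lt_iff h huv hvu').1 hxy.2⟩
  refine (ssubset_iff_of_subset hsub).2 ⟨(v, u), hmem, ?_⟩
  simp [inversions, h.lt.not_gt]

end Inversions

theorem minimalIMAP_eq_of_isLinExt {C : Set (CIRel p)} (hC : Graphoid C) {H : DAG p}
    {π₀ : Perm (Fin p)} (hsub : (minimalIMAP C π₀).arrows ⊆ H.arrows) (h₀ : IsLinExt H π₀)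
    (π : Perm (Fin p)) (hπ : IsLinExt H π) : minimalIMAP C π = minimalIMAP C π₀ := by
  by_cases hπ₀ : π = π₀
  · rw [hπ₀]
  obtain ⟨u, v, huv, hvu⟩ := exists_covBy_inversion hπ₀
  have hdec := inversions_swap_mul_ssubset huv hvu
  have hH_uv : (u, v) ∉ H.arrows := fun h => (h₀ u v h).not_gt hvu
  have hρ : IsLinExt H (swap u v * π) := hπ.swap_mul huv fun e he =>
    mem_insert_of_mem (mem_erase.2 ⟨ne_of_mem_of_not_mem he hH_uv, he⟩)
  have ih := minimalIMAP_eq_of_isLinExt hC hsub h₀ (swap u v * π) hρ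
  have hvu_ρ : (swap u v * π).symm v ⋖ (swap u v * π).symm u := by simpa using huv
  have hρ_vu : (v, u) ∉ (minimalIMAP C (swap u v * π)).arrows := by
    rw [ih]
    exact fun h => huv.lt.not_gt (hπ v u (hsub h))
  calc minimalIMAP C π = minimalIMAP C (swap v u * (swap u v * π)) := by
        rw [swap_comm, ← mul_assoc, swap_mul_self, one_mul]
    _ = minimalIMAP C (swap u v * π) := minimalIMAP_swap_mul_eq hC hvu_ρ hρ_vu
    _ = minimalIMAP C π₀ := ih
termination_by (inversions π₀ π).card
decreasing_by exact card_lt_card hdec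

theorem exists_perm_symm_lt_iff {α : Type*} [LinearOrder α] (f : Fin p → α)
    (hf : Function.Injective f) : ∃ σ : Perm (Fin p), ∀ x y, σ.symm x < σ.symm y ↔ f x < f y := by
  have hmono : StrictMono (f ∘ Tuple.sort f) :=
    (Tuple.monotone_sort f).strictMono_of_injective (hf.comp (Tuple.sort f).injective)
  refine ⟨Tuple.sort f, fun x y => ?_⟩
  simpa using (hmono.lt_iff_lt (a := (Tuple.sort f).symm x) (b := (Tuple.sort f).symm y)).symm

theorem exists_isLinExt_covBy {H G : DAG p} {a b : Fin p} (hab : a ≠ b)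
    (hpa : H.parents a ⊆ H.parents b) (hG : insert (b, a) (H.arrows.erase (a, b)) ⊆ G.arrows)
    {π : Perm (Fin p)} (hπ : IsLinExt G π) :
    ∃ σ : Perm (Fin p), IsLinExt H σ ∧ σ.symm a ⋖ σ.symm b := by
  have hπH : ∀ x y, (x, y) ∈ H.arrows → (x, y) ≠ (a, b) → π.symm x < π.symm y :=
    fun x y h hne => hπ x y (hG (mem_insert_of_mem (mem_erase.2 ⟨hne, h⟩)))
  have hba : π.symm b < π.symm a := hπ b a (hG (mem_insert_self _ _))
  -- order the nodes as in `π`, except that `a` is placed immediately before `b`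
  let key : Fin p → ℕ := fun k => if k = a then 2 * π.symm b + 1 else 2 * π.symm k + 2
  have hkey : Function.Injective key := by
    intro x y hxy
    simp only [key] at hxy
    split_ifs at hxy with hx hy hy
    · rw [hx, hy]
    · omega
    · omega
    · exact π.symm.injective (Fin.ext (by omega))
  obtain ⟨σ, hσ⟩ := exists_perm_symm_lt_iff key hkey
  refine ⟨σ, fun x y hxy => ?_, ⟨?_, fun c h₁ h₂ => ?_⟩⟩
  · rw [hσ]
    have hxy' : (x, y) ∈ H.arrows := hxy
    have hloop : x ≠ y := by
      rintro rfl
      exact H.acyclic x (Relation.TransGen.single hxy')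
    rcases eq_or_ne x a with rfl | hxa
    · rcases eq_or_ne y b with rfl | hyb
      · simp [key, hab.symm]
      · have := hπH x y hxy' (by simp [hyb])
        simp only [key, if_pos, hloop.symm, if_false]
        rw [Fin.lt_def] at hba this
        omega
    · rcases eq_or_ne y a with rfl | hya
      · have hxb : (x, b) ∈ H.arrows := DAG.mem_parents.1 (hpa (DAG.mem_parents.2 hxy'))
        have := hπH x b hxb (by simp [hxa])
        simp only [key, hxa, if_false, if_true]
        rw [Fin.lt_def] at this
        omega
      · have := hπH x y hxy' (by simp [hxa])
        simp only [key, hxa, hya, if_false]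
        rw [Fin.lt_def] at this
        omega
  · simp [hσ, key, hab.symm]
  · obtain ⟨k, rfl⟩ := σ.symm.surjective c
    rw [hσ] at h₁ h₂
    simp only [key, hab.symm, if_true, if_false] at h₁ h₂
    split_ifs at h₁ h₂ <;> omega

theorem minimalIMAP_of_linext_is_subDAG_general
    (p : ℕ) (C : Set (CIRel p)) (hC : Graphoid C)
    (τ : Equiv.Perm (Fin p)) (G : DAG p) (a b : Fin p)
    (hcov : (minimalIMAP C τ).Covered a b)
    (hG : G.arrows = insert (b, a) ((minimalIMAP C τ).arrows.erase (a, b)))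
    (π : Equiv.Perm (Fin p)) (hlin : IsLinExt G π) :
    (minimalIMAP C π).arrows ⊆ G.arrows := by
  have hab : a ≠ b := fun h => (isLinExt_minimalIMAP C τ a b hcov.1).ne (congrArg τ.symm h)
  obtain ⟨σ, hσ, hσab⟩ := exists_isLinExt_covBy hab (hcov.2 ▸ erase_subset _ _) hG.ge hlin
  have hστ : minimalIMAP C σ = minimalIMAP C τ :=
    minimalIMAP_eq_of_isLinExt hC subset_rfl (isLinExt_minimalIMAP C τ) σ hσ
  have hρG : (minimalIMAP C (swap a b * σ)).arrows ⊆ G.arrows := by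
    rw [hG, ← hστ]
    exact minimalIMAP_swap_mul_subset hC.1 hσab (hστ ▸ hcov.2)
  have hρ : IsLinExt G (swap a b * σ) := hσ.swap_mul hσab hG.le
  rw [minimalIMAP_eq_of_isLinExt hC hρG hρ π hlin]
  exact hρG

/-- Lemma 30, subDAG lemma: let `C` be a graphoid, `G_τ` a
minimal I-MAP w.r.t. `C`, and let `G` be a DAG that is Markov equivalent to
`G_τ` and obtained from `G_τ` by reversing a single covered arrow `a → b`.
Then for every linear extension `π` of `G`, the minimal I-MAP `G_π` is a
subDAG of `G`: every arrow of `G_π` is an arrow of `G`. -/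
theorem minimalIMAP_of_linext_is_subDAG
    (p : ℕ) (C : Set (CIRel p)) (hC : Graphoid C)
    (τ : Equiv.Perm (Fin p)) (G : DAG p) (a b : Fin p)
    (hcov : (minimalIMAP C τ).Covered a b)
    (hG : G.arrows = insert (b, a) ((minimalIMAP C τ).arrows.erase (a, b)))
    (hME : MarkovEquiv G (minimalIMAP C τ))
    (π : Equiv.Perm (Fin p)) (hlin : IsLinExt G π) :
    (minimalIMAP C π).arrows ⊆ G.arrows :=
  minimalIMAP_of_linext_is_subDAG_general p C hC τ G a b hcov hG π hlin

end GSP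
end
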